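/- arXiv:0808.2522 — 6 statements merged into one kernel-verified Lean document; each statement's English description precedes it below -/
import Mathlib

section
/- Let T be a universally axiomatized theory in a functional language L, and C a finitely generated L-algebra. Then C is a model of T if and only if C is isomorphic to T_L(X)/θ_p for some complete atomic type p in T over a finite variable set X. -/
open FirstOrder Language Structure

universe u v

namespace UAG

variable {L : FirstOrder.Language}

/-- The kernel setoid on the term algebra determined by a tuple `b` in an algebra `N`:
two terms are related iff they take equal values at `b`.  When `p` is the complete atomic type
of `b`, this is exactly the congruence `θ_p` induced by `p⁺`. -/
def kernelSetoid (L : FirstOrder.Language) {N : Type u} [L.Structure N] {α : Type v} (b : α → N) :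
    Setoid (L.Term α) :=
  ⟨fun t₁ t₂ => t₁.realize b = t₂.realize b,
    ⟨fun _ => rfl, Eq.symm, Eq.trans⟩⟩

/-- The quotient algebra `T_L(X)/θ_p` of the term algebra by the congruence of a complete
atomic type realized at `b`. -/
noncomputable def typeQuotStructure (L : FirstOrder.Language) {N : Type u} [L.Structure N] {α : Type v} (b : α → N) :
    L.Structure (Quotient (kernelSetoid L b)) where
  funMap {k} f x := Quotient.mk (kernelSetoid L b) (Term.func f fun i => (x i).out)
  RelMap {k} _ _ := False

/-- The quotient embeds into `N` via realization at `b`. -/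
noncomputable def quotEmbedding {N : Type u} [L.Structure N] [∀ n, IsEmpty (L.Relations n)]
    {α : Type v} (b : α → N) :
    @FirstOrder.Language.Embedding L (Quotient (kernelSetoid L b)) N (typeQuotStructure L b) _ := by
  letI := typeQuotStructure L b
  exact
  { toFun := Quotient.lift (Term.realize b) (fun _ _ h => h)
    inj' := by
      rintro ⟨t₁⟩ ⟨t₂⟩ h
      exact Quotient.sound h
    map_fun' := by
      intro k f x
      show Term.realize b (Term.func f fun i => (x i).out) = _
      simp only [Term.realize]
      congr 1
      funext i
      exact congrArg (Quotient.lift (Term.realize b) fun _ _ h => h) (Quotient.out_eq (x i))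
    map_rel' := fun {k} r => isEmptyElim r }

/-- If `b` generates `C`, the quotient algebra is isomorphic to `C`. -/
noncomputable def quotEquiv {C : Type u} [L.Structure C] [∀ n, IsEmpty (L.Relations n)]
    {α : Type v} (b : α → C)
    (hsurj : Function.Surjective (Quotient.lift (Term.realize b) (fun _ _ h => h) :
      Quotient (kernelSetoid L b) → C)) :
    @FirstOrder.Language.Equiv L (Quotient (kernelSetoid L b)) C (typeQuotStructure L b) _ := by
  letI := typeQuotStructure L b
  exact
  { toEquiv := Equiv.ofBijective _ ⟨(quotEmbedding b).inj', hsurj⟩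
    map_fun' := (quotEmbedding b).map_fun'
    map_rel' := fun {k} r => isEmptyElim r }

/-- Let `T` be a universally axiomatized theory in a functional language `L`
and `C` a finitely generated `L`-algebra.  Then `C` is a model of `T` if and only if `C` is
isomorphic to `T_L(X)/θ_p` for some complete atomic type `p` of `T` in finitely many variables
(encoded by its positive part `p`, realized at a tuple `b` in some model `N` of `T`; `θ_p` is
then the kernel congruence of `b`). -/
theorem model_iff_defined_by_complete_atomic_type [∀ n, IsEmpty (L.Relations n)]
    (T : L.Theory) (hT : T.IsUniversal)
    (C : Type u) [L.Structure C] (hfg : Structure.FG L C) :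
    C ⊨ T ↔
      ∃ (n : ℕ) (N : Type u) (SN : L.Structure N),
        (@Theory.Model L N SN T) ∧
        ∃ (b : Fin n → N) (p : Set (L.Term (Fin n) × L.Term (Fin n))),
          (∀ t₁ t₂ : L.Term (Fin n),
            (t₁, t₂) ∈ p ↔ @Term.realize L N SN _ b t₁ = @Term.realize L N SN _ b t₂) ∧
          Nonempty (@FirstOrder.Language.Equiv L C
            (Quotient (@kernelSetoid L N SN _ b)) _ (@typeQuotStructure L N SN _ b)) := by
  constructor
  · intro hM
    obtain ⟨n, b, hb⟩ := Substructure.fg_iff_exists_fin_generating_family.mp hfg.out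
    refine ⟨n, C, inferInstance, hM, b,
      {q | q.1.realize b = q.2.realize b}, fun _ _ => Iff.rfl, ?_⟩
    letI := typeQuotStructure L b
    have hsurj : Function.Surjective (Quotient.lift (Term.realize b) (fun _ _ h => h) :
        Quotient (kernelSetoid L b) → C) := by
      intro x
      have hx : x ∈ Substructure.closure L (Set.range b) := hb ▸ Substructure.mem_top x
      obtain ⟨t, ht⟩ := Substructure.mem_closure_iff_exists_term.mp hx
      refine ⟨⟦t.relabel fun y => Classical.choose y.2⟧, ?_⟩
      rw [← ht]
      show Term.realize b (t.relabel _) = _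
      rw [Term.realize_relabel]
      congr 1
      funext y
      exact Classical.choose_spec y.2
    exact ⟨(quotEquiv b hsurj).symm⟩
  · rintro ⟨n, N, SN, hN, b, p, hp, ⟨e⟩⟩
    haveI := hN
    letI := typeQuotStructure L b
    exact Theory.IsUniversal.models_of_embedding
      ((quotEmbedding b).comp e.toEmbedding)

end UAG
end

section
/- An L-algebra B is equationally Noetherian (every system of equations in finitely many variables is equivalent over B to a finite subsystem) if and only if for every natural number n the Zariski topology on Bⁿ is Noetherian (satisfies the descending chain condition on closed sets). -/
open FirstOrder Language Structure

universe u v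

namespace UAG

variable {L : FirstOrder.Language}

/-- The algebraic set `V_B(S)` defined in `B` by a system `S` of equations in `n` variables. -/
def solSet (B : Type u) [L.Structure B] {n : ℕ}
    (S : Set (L.Term (Fin n) × L.Term (Fin n))) : Set (Fin n → B) :=
  {x | ∀ p ∈ S, p.1.realize x = p.2.realize x}

/-- The Zariski topology on `Bⁿ`: the algebraic sets form a prebasis of closed sets, i.e. the
topology is generated by the complements of the algebraic sets. -/
def zariskiTopology (L : FirstOrder.Language) (B : Type u) [L.Structure B] (n : ℕ) :
    TopologicalSpace (Fin n → B) :=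
  TopologicalSpace.generateFrom
    {U | ∃ S : Set (L.Term (Fin n) × L.Term (Fin n)), U = (solSet B S)ᶜ}

lemma solSet_antitone (B : Type u) [L.Structure B] {n : ℕ}
    {S T : Set (L.Term (Fin n) × L.Term (Fin n))} (h : S ⊆ T) :
    solSet B T ⊆ solSet B S := fun _x hx p hp => hx p (h hp)

lemma isClosed_solSet (B : Type u) [L.Structure B] {n : ℕ}
    (S : Set (L.Term (Fin n) × L.Term (Fin n))) :
    @IsClosed _ (zariskiTopology L B n) (solSet B S) := by
  letI := zariskiTopology L B n
  exact ⟨TopologicalSpace.GenerateOpen.basic _ ⟨S, rfl⟩⟩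

/-- An `L`-algebra `B` is equationally Noetherian (every system of equations
in finitely many variables is equivalent over `B` to a finite subsystem) if and only if for every
`n` the Zariski topology on `Bⁿ` is Noetherian. -/
theorem equationally_noetherian_iff_zariski_noetherian
    (B : Type u) [L.Structure B] :
    (∀ (n : ℕ) (S : Set (L.Term (Fin n) × L.Term (Fin n))),
      ∃ S₀ : Set (L.Term (Fin n) × L.Term (Fin n)),
        S₀ ⊆ S ∧ S₀.Finite ∧ solSet B S₀ = solSet B S) ↔
    (∀ n : ℕ, @TopologicalSpace.NoetherianSpace (Fin n → B) (zariskiTopology L B n)) := by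
  constructor
  · intro H n
    letI := zariskiTopology L B n
    rw [TopologicalSpace.noetherianSpace_iff_isCompact]
    intro K
    rw [isCompact_iff_ultrafilter_le_nhds]
    intro f hf
    set Sig : Set (L.Term (Fin n) × L.Term (Fin n)) := ⋃₀ {T | solSet B T ∈ f} with hSig
    obtain ⟨S₀, hsub, hfin, heq⟩ := H n Sig
    have hmemSg : solSet B Sig ∈ f := by
      have hchoose : ∀ p ∈ S₀, ∃ T, solSet B T ∈ f ∧ p ∈ T := fun p hp => hsub hp
      choose T hTf hTmem using hchoose
      haveI : Finite S₀ := hfin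
      have hint : (⋂ q : S₀, solSet B (T q q.2)) ∈ f :=
        Filter.iInter_mem.2 fun q => hTf q q.2
      refine Filter.mem_of_superset hint ?_
      intro x hx
      rw [← heq]
      intro p hp
      have hxp : x ∈ solSet B (T p hp) := by
        simp only [Set.mem_iInter] at hx
        exact hx ⟨p, hp⟩
      exact hxp p (hTmem p hp)
    have hK : K ∈ f := Filter.le_principal_iff.1 hf
    obtain ⟨x, hxSg, hxK⟩ := Ultrafilter.nonempty_of_mem (f.inter_mem hmemSg hK)
    refine ⟨x, hxK, ?_⟩
    show ↑f ≤ @nhds _ (TopologicalSpace.generateFrom _) x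
    rw [TopologicalSpace.nhds_generateFrom]
    refine le_iInf₂ fun s hs => ?_
    obtain ⟨hxs, T, rfl⟩ := hs
    rw [Filter.le_principal_iff]
    refine Ultrafilter.compl_mem_iff_notMem.2 fun hTf => ?_
    exact hxs fun p hp => hxSg p (Set.mem_sUnion.2 ⟨T, hTf, hp⟩)
  · intro H n S
    haveI := H n
    letI := zariskiTopology L B n
    set 𝒞 : Set (TopologicalSpace.Closeds (Fin n → B)) :=
      {C | ∃ F, F ⊆ S ∧ F.Finite ∧ (C : Set (Fin n → B)) = solSet B F} with h𝒞
    have hne : 𝒞.Nonempty :=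
      ⟨⟨solSet B ∅, isClosed_solSet B ∅⟩, ∅, Set.empty_subset _, Set.finite_empty, rfl⟩
    obtain ⟨m, hm𝒞, hmin⟩ := (wellFounded_lt (α := TopologicalSpace.Closeds (Fin n → B))).has_min 𝒞 hne
    obtain ⟨F₀, hF₀S, hF₀fin, hmF₀⟩ := hm𝒞
    refine ⟨F₀, hF₀S, hF₀fin, ?_⟩
    refine Set.Subset.antisymm ?_ (solSet_antitone B hF₀S)
    intro x hx p hp
    have hC' : (⟨solSet B (insert p F₀), isClosed_solSet B _⟩ :
        TopologicalSpace.Closeds (Fin n → B)) ∈ 𝒞 :=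
      ⟨insert p F₀, Set.insert_subset hp hF₀S, hF₀fin.insert p, rfl⟩
    have hle : (⟨solSet B (insert p F₀), isClosed_solSet B _⟩ :
        TopologicalSpace.Closeds (Fin n → B)) ≤ m := by
      rw [← SetLike.coe_subset_coe, hmF₀]
      exact solSet_antitone B (Set.subset_insert p F₀)
    have heq' : (⟨solSet B (insert p F₀), isClosed_solSet B _⟩ :
        TopologicalSpace.Closeds (Fin n → B)) = m := by
      by_contra hne'
      exact hmin _ hC' (lt_of_le_of_ne hle hne')
    have : solSet B (insert p F₀) = solSet B F₀ := by
      have := congrArg (fun C : TopologicalSpace.Closeds (Fin n → B) => (C : Set (Fin n → B))) heq'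
      simpa [hmF₀] using this
    rw [← this] at hx
    exact hx p (Set.mem_insert p F₀)

end UAG
end

section
/- Let (W, T) be a topological space whose closed sets are generated by a prebase A of closed sets that is closed under finite intersections, and let B be the collection of finite unions of sets from A. Then W is Noetherian if and only if A satisfies the descending chain condition; in that case every closed set of T belongs to B, and every closed set is a finite union of irreducible closed sets from A, uniquely up to permutation when the decomposition is irredundant. -/
/-
With `A` closed under finite intersections, containing `univ` and satisfying the descending chain
condition, a minimal finite subintersection of any family `F ⊆ A` equals `⋂₀ F`; in particular
`⋂₀ F ∈ A`. Passing to complements, every cover by subbasic open sets `aᶜ` has a finite subcover,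
so by Alexander's subbasis theorem every subset is compact, i.e. the space is Noetherian.

In a Noetherian space every closed set is a finite union of irreducible closed sets, and we may
keep only the maximal ones. An irreducible closed set `Z` is the intersection of the members of
`A` containing it: a basic open neighbourhood of a point outside `Z` is a finite intersection of
sets `aᶜ` missing `Z`, and irreducibility of `Z` forces one of the `aᶜ` alone to miss `Z`. Hence
`Z ∈ A`. For uniqueness, every member of one irredundant decomposition lies in a member of the
other, and irredundancy turns these inclusions into equalities.
-/

universe u

open Set TopologicalSpace

theorem Set.isWF_iff_forall_antitone_eventually_eq {α : Type*} [PartialOrder α] {s : Set α} :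
    s.IsWF ↔ ∀ f : ℕ → α, (∀ k, f k ∈ s) → (∀ k, f (k + 1) ≤ f k) →
      ∃ N, ∀ k, N ≤ k → f k = f N := by
  refine ⟨fun hs f hfs hf => ?_, fun h => isWF_iff_no_descending_seq.2 fun f hf hfs => ?_⟩
  · obtain ⟨_, ⟨N, rfl⟩, hN⟩ :=
      (hs.mono (range_subset_iff.2 hfs)).exists_minimal (range_nonempty f)
    exact ⟨N, fun k hk => le_antisymm (antitone_nat_of_succ_le hf hk) (hN ⟨k, rfl⟩
      (antitone_nat_of_succ_le hf hk))⟩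
  · obtain ⟨N, hN⟩ := h f hfs fun k => (hf k.lt_succ_self).le
    exact (hf N.lt_succ_self).ne (hN (N + 1) N.le_succ)

theorem Set.IsWF.exists_finite_sInter_eq {α : Type*} {A : Set (Set α)} (hA : A.IsWF)
    (huniv : univ ∈ A) (hinter : ∀ s ∈ A, ∀ t ∈ A, s ∩ t ∈ A) {F : Set (Set α)} (hF : F ⊆ A) :
    ∃ G ⊆ F, G.Finite ∧ ⋂₀ G ∈ A ∧ ⋂₀ G = ⋂₀ F := by
  set S := {m ∈ A | ∃ G ⊆ F, G.Finite ∧ ⋂₀ G = m}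
  obtain ⟨_, ⟨hmA, G, hGF, hG, rfl⟩, hmin⟩ :=
    (hA.mono fun _ hm => hm.1).exists_minimal (⟨univ, huniv, ∅, by simp⟩ : S.Nonempty)
  refine ⟨G, hGF, hG, hmA, (sInter_subset_sInter hGF).antisymm' (subset_sInter fun a ha => ?_)⟩
  have hGa : ⋂₀ insert a G ∈ S :=
    ⟨by simpa [inter_comm] using hinter _ hmA a (hF ha), insert a G, insert_subset ha hGF,
      hG.insert a, rfl⟩
  exact (hmin hGa (sInter_subset_sInter (subset_insert a G))).trans
    (sInter_subset_of_mem (mem_insert a G))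

theorem Set.IsWF.sInter_mem {α : Type*} {A : Set (Set α)} (hA : A.IsWF)
    (huniv : univ ∈ A) (hinter : ∀ s ∈ A, ∀ t ∈ A, s ∩ t ∈ A) {F : Set (Set α)} (hF : F ⊆ A) :
    ⋂₀ F ∈ A := by
  obtain ⟨G, -, -, hGA, hGF⟩ := hA.exists_finite_sInter_eq huniv hinter hF
  exact hGF ▸ hGA

section GeneratedByClosed

variable {X : Type*} [T : TopologicalSpace X] {A : Set (Set X)}

theorem isClosed_of_mem_of_eq_generateFrom_compl (hgen : T = generateFrom (compl '' A))
    {a : Set X} (ha : a ∈ A) : IsClosed a :=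
  isOpen_compl_iff.1 (hgen ▸ isOpen_generateFrom_of_mem ⟨a, ha, rfl⟩)

theorem isCompact_of_eq_generateFrom_compl_of_isWF (hgen : T = generateFrom (compl '' A))
    (hA : A.IsWF) (huniv : univ ∈ A) (hinter : ∀ s ∈ A, ∀ t ∈ A, s ∩ t ∈ A) (s : Set X) :
    IsCompact s := by
  refine isCompact_generateFrom hgen fun P hP hsP => ?_
  obtain ⟨G, hGP, hG, -, hGF⟩ := hA.exists_finite_sInter_eq huniv hinter (F := {a | aᶜ ∈ P})
    fun a ha => by obtain ⟨b, hb, hab⟩ := hP ha; rwa [← compl_inj_iff.1 hab]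
  refine ⟨compl '' G, image_subset_iff.2 hGP, hG.image _, ?_⟩
  rw [← compl_sInter, hGF, compl_sInter]
  exact hsP.trans_eq (congrArg sUnion (image_preimage_eq P compl_surjective)).symm

theorem noetherianSpace_iff_isWF_of_eq_generateFrom_compl (hgen : T = generateFrom (compl '' A))
    (huniv : univ ∈ A) (hinter : ∀ s ∈ A, ∀ t ∈ A, s ∩ t ∈ A) : NoetherianSpace X ↔ A.IsWF := by
  refine ⟨fun _ => isWF_iff_no_descending_seq.2 fun f hf hfA => ?_, fun hA =>
    noetherianSpace_iff_isCompact.2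
      (isCompact_of_eq_generateFrom_compl_of_isWF hgen hA huniv hinter)⟩
  exact not_strictAnti_of_wellFoundedLT
    (fun n => (⟨f n, isClosed_of_mem_of_eq_generateFrom_compl hgen (hfA n)⟩ : Closeds X))
    fun _ _ hmn => hf hmn

theorem IsIrreducible.exists_mem_subset_notMem_of_eq_generateFrom_compl
    (hgen : T = generateFrom (compl '' A)) {Z : Set X} (hZ : IsIrreducible Z) {U : Set X}
    (hU : IsOpen U) (hZU : Disjoint Z U) {x : X} (hx : x ∈ U) : ∃ a ∈ A, Z ⊆ a ∧ x ∉ a := by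
  replace hU : GenerateOpen (compl '' A) U := by rwa [hgen] at hU
  induction hU with
  | basic u hu =>
    obtain ⟨a, ha, rfl⟩ := hu
    exact ⟨a, ha, disjoint_compl_right_iff_subset.1 hZU, hx⟩
  | univ => exact absurd (disjoint_univ.1 hZU) hZ.nonempty.ne_empty
  | inter u v hu hv ihu ihv =>
    by_cases hZu : Disjoint Z u
    · exact ihu hZu hx.1
    by_cases hZv : Disjoint Z v
    · exact ihv hZv hx.2
    rw [not_disjoint_iff_nonempty_inter] at hZu hZv
    exact absurd (hZ.2 u v (hgen ▸ hu) (hgen ▸ hv) hZu hZv)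
      (disjoint_iff_inter_eq_empty.1 hZU ▸ not_nonempty_empty)
  | sUnion S hS ih =>
    obtain ⟨u, huS, hxu⟩ := hx
    exact ih u huS (hZU.mono_right (subset_sUnion_of_mem huS)) hxu

theorem IsIrreducible.mem_of_isClosed (hgen : T = generateFrom (compl '' A)) (hA : A.IsWF)
    (huniv : univ ∈ A) (hinter : ∀ s ∈ A, ∀ t ∈ A, s ∩ t ∈ A) {Z : Set X} (hZ : IsIrreducible Z)
    (hZc : IsClosed Z) : Z ∈ A := by
  have hZ_eq : ⋂₀ {a ∈ A | Z ⊆ a} = Z := by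
    refine (subset_sInter fun a ha => ha.2).antisymm' fun x hx => ?_
    by_contra hxZ
    obtain ⟨a, ha, hZa, hxa⟩ := hZ.exists_mem_subset_notMem_of_eq_generateFrom_compl hgen
      hZc.isOpen_compl disjoint_compl_right hxZ
    exact hxa (hx a ⟨ha, hZa⟩)
  exact hZ_eq ▸ hA.sInter_mem huniv hinter fun a ha => ha.1

end GeneratedByClosed

section IrreducibleDecomposition

variable {X : Type*} [TopologicalSpace X]

theorem TopologicalSpace.NoetherianSpace.exists_finset_irreducible_isAntichain
    [NoetherianSpace X] {Y : Set X} (hY : IsClosed Y) :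
    ∃ s : Finset (Set X), (∀ Z ∈ s, IsClosed Z ∧ IsIrreducible Z) ∧
      Y = ⋃₀ ↑s ∧ IsAntichain (· ⊆ ·) (s : Set (Set X)) := by
  obtain ⟨S, hSf, hSc, hSi, rfl⟩ := NoetherianSpace.exists_finite_set_isClosed_irreducible hY
  have hMf : {Z | Maximal (· ∈ S) Z}.Finite := hSf.subset fun _ hZ => hZ.prop
  refine ⟨hMf.toFinset, fun Z hZ => ?_, ?_, ?_⟩
  · exact ⟨hSc Z (hMf.mem_toFinset.1 hZ).prop, hSi Z (hMf.mem_toFinset.1 hZ).prop⟩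
  · rw [hMf.coe_toFinset]
    refine (sUnion_subset_sUnion fun _ hZ => hZ.prop).antisymm' fun x ⟨Z, hZ, hxZ⟩ => ?_
    obtain ⟨Z', hZZ', hZ'⟩ := hSf.exists_le_maximal hZ
    exact ⟨Z', hZ', hZZ' hxZ⟩
  · rw [hMf.coe_toFinset]
    exact setOfPred_maximal_antichain _

theorem Finset.subset_of_sUnion_eq_of_isAntichain {s t : Finset (Set X)}
    (hs : ∀ Z ∈ s, IsClosed Z ∧ IsIrreducible Z) (ht : ∀ Z ∈ t, IsClosed Z ∧ IsIrreducible Z)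
    (hs' : IsAntichain (· ⊆ ·) (s : Set (Set X))) (hst : ⋃₀ (s : Set (Set X)) = ⋃₀ ↑t) :
    s ⊆ t := by
  intro Z hZ
  obtain ⟨Z', hZ't, hZZ'⟩ := isIrreducible_iff_sUnion_isClosed.1 (hs Z hZ).2 t
    (fun Z' hZ' => (ht Z' hZ').1) (hst ▸ subset_sUnion_of_mem hZ)
  obtain ⟨Z'', hZ''s, hZ'Z''⟩ := isIrreducible_iff_sUnion_isClosed.1 (ht Z' hZ't).2 s
    (fun Z'' hZ'' => (hs Z'' hZ'').1) (hst ▸ subset_sUnion_of_mem hZ't)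
  obtain rfl := hs'.eq hZ hZ''s (hZZ'.trans hZ'Z'')
  rwa [hZZ'.antisymm hZ'Z'']

theorem Finset.eq_of_sUnion_eq_of_isAntichain {s t : Finset (Set X)}
    (hs : ∀ Z ∈ s, IsClosed Z ∧ IsIrreducible Z) (ht : ∀ Z ∈ t, IsClosed Z ∧ IsIrreducible Z)
    (hs' : IsAntichain (· ⊆ ·) (s : Set (Set X))) (ht' : IsAntichain (· ⊆ ·) (t : Set (Set X)))
    (hst : ⋃₀ (s : Set (Set X)) = ⋃₀ ↑t) : s = t :=
  (subset_of_sUnion_eq_of_isAntichain hs ht hs' hst).antisymm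
    (subset_of_sUnion_eq_of_isAntichain ht hs ht' hst.symm)

end IrreducibleDecomposition

namespace UAG

/-- Let `(W, T)` be a topological space whose closed sets are generated by a
prebase `A` of closed sets (i.e. `T` is generated by the complements of members of `A`) which is
closed under finite intersections.  Then `W` is Noetherian iff `A` satisfies the descending chain
condition; in that case every closed set is a finite union of members of `A`, and every closed
set is a finite union of irreducible closed sets from `A`, uniquely up to permutation when the
decomposition is irredundant. -/
theorem noetherian_prebase (W : Type u) (A : Set (Set W))
    (T : TopologicalSpace W)
    (hgen : T = TopologicalSpace.generateFrom (compl '' A))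
    (hunion : Set.univ ∈ A)
    (hinter : ∀ s ∈ A, ∀ t ∈ A, s ∩ t ∈ A) :
    (@TopologicalSpace.NoetherianSpace W T ↔
      ∀ f : ℕ → Set W, (∀ k, f k ∈ A) → (∀ k, f (k + 1) ⊆ f k) →
        ∃ N, ∀ k, N ≤ k → f k = f N) ∧
    (@TopologicalSpace.NoetherianSpace W T →
      ∀ Y : Set W, @IsClosed W T Y →
        (∃ s : Finset (Set W), (∀ Z ∈ s, Z ∈ A) ∧ Y = ⋃₀ ↑s) ∧
        (∃ s : Finset (Set W),
          (∀ Z ∈ s, Z ∈ A ∧ @IsClosed W T Z ∧ @IsIrreducible W T Z) ∧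
          Y = ⋃₀ ↑s ∧
          (∀ Z₁ ∈ s, ∀ Z₂ ∈ s, Z₁ ⊆ Z₂ → Z₁ = Z₂) ∧
          (∀ t : Finset (Set W),
            (∀ Z ∈ t, Z ∈ A ∧ @IsClosed W T Z ∧ @IsIrreducible W T Z) →
            Y = ⋃₀ ↑t → (∀ Z₁ ∈ t, ∀ Z₂ ∈ t, Z₁ ⊆ Z₂ → Z₁ = Z₂) → t = s))) := by
  have hiff : NoetherianSpace W ↔ A.IsWF :=
    noetherianSpace_iff_isWF_of_eq_generateFrom_compl hgen hunion hinter
  refine ⟨hiff.trans isWF_iff_forall_antitone_eventually_eq, fun hN Y hY => ?_⟩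
  have hA : A.IsWF := hiff.1 hN
  obtain ⟨s, hs, hYs, hanti⟩ := NoetherianSpace.exists_finset_irreducible_isAntichain hY
  have hsA : ∀ Z ∈ s, Z ∈ A := fun Z hZ =>
    (hs Z hZ).2.mem_of_isClosed hgen hA hunion hinter (hs Z hZ).1
  refine ⟨⟨s, hsA, hYs⟩, s, fun Z hZ => ⟨hsA Z hZ, hs Z hZ⟩, hYs,
    fun _ h₁ _ h₂ => hanti.eq h₁ h₂, fun t ht htY htanti => ?_⟩
  have htanti' : IsAntichain (· ⊆ ·) (t : Set (Set W)) :=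
    fun Z₁ h₁ Z₂ h₂ hne hsub => hne (htanti Z₁ h₁ Z₂ h₂ hsub)
  exact Finset.eq_of_sUnion_eq_of_isAntichain (fun Z hZ => (ht Z hZ).2) hs htanti' hanti
    (htY.symm.trans hYs)

end UAG
end

section
/- If B is an equationally Noetherian L-algebra, then every algebraic set Y ⊆ Bⁿ is a finite union of irreducible algebraic sets Y = Y₁ ∪ ... ∪ Y_m, and if Y_i ⊄ Y_j for i ≠ j this decomposition is unique up to permutation of the components. -/
/-!
Equational Noetherianity gives the descending chain condition on algebraic sets: along a
descending chain `Y₀ ⊇ Y₁ ⊇ ⋯` the radicals increase, a finite subsystem equivalent to their union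
already lies in one radical `Rad(Y_N)`, and then `Y_N ⊆ ⋂ₖ Yₖ`. Noetherian induction splits every
reducible algebraic set into finitely many proper algebraic subsets, so every algebraic set is a
finite union of irreducible ones, and keeping only the maximal components makes it irredundant.
An irreducible set covered by finitely many algebraic sets lies in one of them, since it is the union
of its (algebraic) intersections with them; applied in both directions to two irredundant
decompositions, this shows that each component of one is a component of the other.
-/

open FirstOrder Language Structure

universe u

namespace UAG

variable {L : FirstOrder.Language}

/-- A subset of `Bⁿ` is algebraic if it is the solution set of a system of equations. -/
def IsAlgebraicSet (B : Type u) [L.Structure B] {n : ℕ} (Y : Set (Fin n → B)) : Prop :=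
  ∃ S : Set (L.Term (Fin n) × L.Term (Fin n)), Y = solSet B S

/-- An algebraic set is irreducible if it is not a finite union of proper algebraic subsets. -/
def IsIrreducibleAlgSet (B : Type u) [L.Structure B] {n : ℕ} (Y : Set (Fin n → B)) : Prop :=
  IsAlgebraicSet (L := L) B Y ∧
    ∀ s : Finset (Set (Fin n → B)),
      (∀ Z ∈ s, IsAlgebraicSet (L := L) B Z ∧ Z ⊂ Y) → Y ≠ ⋃₀ ↑s

theorem exists_irredundant_subset_sUnion_eq {α : Type*} (s : Finset (Set α)) :
    ∃ s' ⊆ s, ⋃₀ (s' : Set (Set α)) = ⋃₀ ↑s ∧ ∀ Z₁ ∈ s', ∀ Z₂ ∈ s', Z₁ ⊆ Z₂ → Z₁ = Z₂ := by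
  classical
  refine ⟨{Z ∈ s | Maximal (· ∈ s) Z}, Finset.filter_subset _ _, ?_, fun Z₁ h₁ Z₂ h₂ h =>
    (Finset.mem_filter.1 h₁).2.eq_of_subset (Finset.mem_filter.1 h₂).1 h⟩
  refine (Set.sUnion_mono (Finset.coe_subset.2 (Finset.filter_subset _ _))).antisymm
    (Set.sUnion_subset fun Z hZ => ?_)
  obtain ⟨W, hZW, hW⟩ := s.exists_le_maximal hZ
  exact Set.subset_sUnion_of_subset _ W hZW (Finset.mem_filter.2 ⟨hW.prop, hW⟩)

def IsEquationallyNoetherianIn (B : Type u) [L.Structure B] (n : ℕ) : Prop :=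
  ∀ S : Set (L.Term (Fin n) × L.Term (Fin n)), ∃ S₀ ⊆ S, S₀.Finite ∧ solSet B S₀ = solSet B S

section

variable {B : Type u} [L.Structure B] {n : ℕ}

/-- The radical `Rad_B(Y)`. -/
def rad (Y : Set (Fin n → B)) : Set (L.Term (Fin n) × L.Term (Fin n)) :=
  {p | ∀ x ∈ Y, p.1.realize x = p.2.realize x}

theorem solSet_anti {S T : Set (L.Term (Fin n) × L.Term (Fin n))} (h : S ⊆ T) :
    solSet B T ⊆ solSet B S :=
  fun _ hx p hp => hx p (h hp)

theorem solSet_union (S T : Set (L.Term (Fin n) × L.Term (Fin n))) :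
    solSet B (S ∪ T) = solSet B S ∩ solSet B T := by
  ext x
  simp only [solSet, Set.mem_union, or_imp, forall_and, Set.mem_ofPred_eq, Set.mem_inter_iff]

theorem solSet_iUnion {ι : Sort*} (S : ι → Set (L.Term (Fin n) × L.Term (Fin n))) :
    solSet B (⋃ i, S i) = ⋂ i, solSet B (S i) := by
  ext x
  simp only [solSet, Set.mem_iUnion, Set.mem_ofPred_eq, Set.mem_iInter, forall_exists_index]
  exact forall_comm

theorem rad_anti {Y Z : Set (Fin n → B)} (h : Y ⊆ Z) : rad (L := L) Z ⊆ rad Y :=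
  fun _ hp x hx => hp x (h hx)

theorem IsAlgebraicSet.solSet_rad {Y : Set (Fin n → B)} (hY : IsAlgebraicSet (L := L) B Y) :
    solSet B (rad (L := L) Y) = Y := by
  obtain ⟨S, rfl⟩ := hY
  have hS : S ⊆ rad (solSet B S) := fun p hp _ hx => hx p hp
  exact (solSet_anti hS).antisymm fun _ hx _ hp => hp _ hx

theorem IsAlgebraicSet.inter {Y Z : Set (Fin n → B)} (hY : IsAlgebraicSet (L := L) B Y)
    (hZ : IsAlgebraicSet (L := L) B Z) : IsAlgebraicSet (L := L) B (Y ∩ Z) := by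
  obtain ⟨S, rfl⟩ := hY
  obtain ⟨T, rfl⟩ := hZ
  exact ⟨S ∪ T, (solSet_union S T).symm⟩

theorem exists_subset_iInter_of_antitone (hB : IsEquationallyNoetherianIn (L := L) B n)
    {Y : ℕ → Set (Fin n → B)} (hY : ∀ k, IsAlgebraicSet (L := L) B (Y k)) (hanti : Antitone Y) :
    ∃ N, Y N ⊆ ⋂ k, Y k := by
  obtain ⟨S₀, hS₀, hfin, hsol⟩ := hB (⋃ k, rad (Y k))
  have hdir : Directed (· ⊆ ·) fun k => rad (L := L) (Y k) :=
    (Monotone.directed_le fun _ _ h => rad_anti (hanti h))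
  obtain ⟨N, hN⟩ := hdir.exists_mem_subset_of_finset_subset_biUnion
    (s := hfin.toFinset) (by rw [hfin.coe_toFinset]; exact hS₀)
  rw [hfin.coe_toFinset] at hN
  refine ⟨N, ?_⟩
  calc Y N = solSet B (rad (Y N)) := (hY N).solSet_rad.symm
    _ ⊆ solSet B S₀ := solSet_anti hN
    _ = ⋂ k, Y k := by simp only [hsol, solSet_iUnion, fun k => (hY k).solSet_rad]

theorem wellFounded_ssubset_algebraicSet (hB : IsEquationallyNoetherianIn (L := L) B n) :
    WellFounded fun Y Z : {Y : Set (Fin n → B) // IsAlgebraicSet (L := L) B Y} => Y.1 ⊂ Z.1 := by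
  refine wellFounded_iff_isEmpty_descending_chain.2 ⟨fun ⟨Y, hY⟩ => ?_⟩
  obtain ⟨N, hN⟩ := exists_subset_iInter_of_antitone hB (fun k => (Y k).2)
    (antitone_nat_of_succ_le fun k => (hY k).subset)
  exact (hY N).not_subset (hN.trans (Set.iInter_subset _ (N + 1)))

theorem IsIrreducibleAlgSet.exists_subset_of_subset_sUnion {Z : Set (Fin n → B)}
    (hZ : IsIrreducibleAlgSet (L := L) B Z) {s : Finset (Set (Fin n → B))}
    (hs : ∀ W ∈ s, IsAlgebraicSet (L := L) B W) (hZs : Z ⊆ ⋃₀ ↑s) : ∃ W ∈ s, Z ⊆ W := by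
  classical
  by_contra! hnot
  refine hZ.2 (s.image (Z ∩ ·)) ?_ ?_
  · simp only [Finset.forall_mem_image]
    exact fun W hW => ⟨hZ.1.inter (hs W hW), Set.inter_subset_left.ssubset_of_not_subset
      fun h => hnot W hW (h.trans Set.inter_subset_right)⟩
  · rw [Finset.coe_image, Set.sUnion_image, ← Set.inter_iUnion₂, ← Set.sUnion_eq_biUnion,
      Set.inter_eq_left.2 hZs]

theorem exists_irreducible_cover (hB : IsEquationallyNoetherianIn (L := L) B n)
    {Y : Set (Fin n → B)} (hY : IsAlgebraicSet (L := L) B Y) :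
    ∃ s : Finset (Set (Fin n → B)), (∀ Z ∈ s, IsIrreducibleAlgSet (L := L) B Z) ∧ Y = ⋃₀ ↑s := by
  classical
  suffices ∀ Y : {Y : Set (Fin n → B) // IsAlgebraicSet (L := L) B Y},
      ∃ s : Finset (Set (Fin n → B)), (∀ Z ∈ s, IsIrreducibleAlgSet (L := L) B Z) ∧ Y.1 = ⋃₀ ↑s
    from this ⟨Y, hY⟩
  intro Y
  induction Y using (wellFounded_ssubset_algebraicSet hB).induction with
  | _ Y ih =>
  by_cases hirr : IsIrreducibleAlgSet (L := L) B Y.1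
  · exact ⟨{Y.1}, by simpa using hirr, by simp⟩
  obtain ⟨s, hs, hYs⟩ : ∃ s : Finset (Set (Fin n → B)),
      (∀ Z ∈ s, IsAlgebraicSet (L := L) B Z ∧ Z ⊂ Y.1) ∧ Y.1 = ⋃₀ ↑s := by
    simpa [IsIrreducibleAlgSet, Y.2] using hirr
  choose! t ht hZt using fun Z hZ => ih ⟨Z, (hs Z hZ).1⟩ (hs Z hZ).2
  refine ⟨s.biUnion t, fun W hW => ?_, ?_⟩
  · obtain ⟨Z, hZ, hWZ⟩ := Finset.mem_biUnion.1 hW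
    exact ht Z hZ W hWZ
  · rw [hYs, Finset.coe_biUnion, Set.sUnion_eq_biUnion]
    simp only [Set.sUnion_iUnion]
    exact Set.iUnion₂_congr hZt

theorem subset_of_sUnion_eq_of_irredundant {s t : Finset (Set (Fin n → B))}
    (hs : ∀ Z ∈ s, IsIrreducibleAlgSet (L := L) B Z)
    (hs' : ∀ Z₁ ∈ s, ∀ Z₂ ∈ s, Z₁ ⊆ Z₂ → Z₁ = Z₂)
    (ht : ∀ Z ∈ t, IsIrreducibleAlgSet (L := L) B Z)
    (hst : ⋃₀ (s : Set (Set (Fin n → B))) = ⋃₀ ↑t) : s ⊆ t := by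
  intro Z hZ
  obtain ⟨W, hW, hZW⟩ := (hs Z hZ).exists_subset_of_subset_sUnion (fun W hW => (ht W hW).1)
    (hst ▸ Set.subset_sUnion_of_mem hZ)
  obtain ⟨Z', hZ', hWZ'⟩ := (ht W hW).exists_subset_of_subset_sUnion (fun Z hZ => (hs Z hZ).1)
    (hst ▸ Set.subset_sUnion_of_mem hW)
  obtain rfl := hs' Z hZ Z' hZ' (hZW.trans hWZ')
  exact hZW.antisymm hWZ' ▸ hW

end

/-- If `B` is an equationally Noetherian `L`-algebra, then every algebraic set
`Y ⊆ Bⁿ` is a finite union of irreducible algebraic sets, and an irredundant such decomposition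
is unique up to permutation of the components. -/
theorem irreducible_decomposition
    (B : Type u) [L.Structure B]
    (hnoeth : ∀ (n : ℕ) (S : Set (L.Term (Fin n) × L.Term (Fin n))),
      ∃ S₀ : Set (L.Term (Fin n) × L.Term (Fin n)),
        S₀ ⊆ S ∧ S₀.Finite ∧ solSet B S₀ = solSet B S)
    (n : ℕ) (Y : Set (Fin n → B)) (hY : IsAlgebraicSet (L := L) B Y) :
    ∃ s : Finset (Set (Fin n → B)),
      (∀ Z ∈ s, IsIrreducibleAlgSet (L := L) B Z) ∧
      Y = ⋃₀ ↑s ∧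
      (∀ Z₁ ∈ s, ∀ Z₂ ∈ s, Z₁ ⊆ Z₂ → Z₁ = Z₂) ∧
      (∀ t : Finset (Set (Fin n → B)),
        (∀ Z ∈ t, IsIrreducibleAlgSet (L := L) B Z) →
        Y = ⋃₀ ↑t → (∀ Z₁ ∈ t, ∀ Z₂ ∈ t, Z₁ ⊆ Z₂ → Z₁ = Z₂) → t = s) := by
  obtain ⟨s₀, hs₀, hYs₀⟩ := exists_irreducible_cover (hnoeth n) hY
  obtain ⟨s, hss₀, hss₀_sUnion, hs_irred⟩ := exists_irredundant_subset_sUnion_eq s₀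
  have hs : ∀ Z ∈ s, IsIrreducibleAlgSet (L := L) B Z := fun Z hZ => hs₀ Z (hss₀ hZ)
  have hYs : Y = ⋃₀ ↑s := hYs₀.trans hss₀_sUnion.symm
  refine ⟨s, hs, hYs, hs_irred, fun t ht hYt ht_irred => ?_⟩
  exact (subset_of_sUnion_eq_of_irredundant ht ht_irred hs (hYt.symm.trans hYs)).antisymm
    (subset_of_sUnion_eq_of_irredundant hs hs_irred ht (hYs.symm.trans hYt))

end UAG
end

section
/- Let B and C be L-algebras in a functional language L. If every existential sentence true in C is true in B (Th_∃(B) ⊇ Th_∃(C)), then C is isomorphic to a limit algebra over B, i.e., C ≅ L(Λ) for some direct system Λ of diagram-formulas each of which is realizable in B. -/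
open FirstOrder Language Structure

universe u v w x

namespace UAG

variable {L : FirstOrder.Language}

/-- A direct system of diagram-formulas in the functional language `L`, encoded semantically.
A diagram-formula over a finite variable set `X i` and a finite reduct (recorded by `Fs i`)
declares all variables pairwise distinct, and for every listed operation symbol `f` and tuple of
variables `x̄` either a conjunct `f(x̄) = y` (recorded by `op i f _ x̄ = some y`) or the conjuncts
`¬ f(x̄) = y` for all variables `y` (recorded by `op i f _ x̄ = none`).  The maps `γ` are the
transition maps of the system; the compatibility axioms state that the conjuncts of
`φ_i(γ_{ij}(X_i))` are conjuncts of `φ_j`, every constant of `L` is eventually named, and every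
operation symbol applied to variables is eventually evaluated. -/
structure DiagramSystem (L : FirstOrder.Language.{u, v}) (I : Type w) [Preorder I] where
  directed : ∀ i j : I, ∃ k, i ≤ k ∧ j ≤ k
  X : I → Type x
  finX : ∀ i, Finite (X i)
  γ : ∀ {i j : I}, i ≤ j → X i → X j
  γ_rfl : ∀ (i : I) (x : X i), γ (le_refl i) x = x
  γ_comp : ∀ {i j k : I} (hij : i ≤ j) (hjk : j ≤ k) (x : X i),
    γ hjk (γ hij x) = γ (le_trans hij hjk) x
  γ_inj : ∀ {i j : I} (hij : i ≤ j), Function.Injective (γ hij)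
  Fs : ∀ _ : I, ∀ n : ℕ, Set (L.Functions n)
  finFs : ∀ i, Set.Finite {q : Σ n, L.Functions n | q.2 ∈ Fs i q.1}
  mono : ∀ {i j : I}, i ≤ j → ∀ {n} (f : L.Functions n), f ∈ Fs i n → f ∈ Fs j n
  op : ∀ (i : I) {n} (f : L.Functions n), f ∈ Fs i n → (Fin n → X i) → Option (X i)
  op_mono_some : ∀ {i j : I} (hij : i ≤ j) {n} (f : L.Functions n) (hf : f ∈ Fs i n)
    (x : Fin n → X i) (y : X i), op i f hf x = some y →
      op j f (mono hij f hf) (fun k => γ hij (x k)) = some (γ hij y)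
  op_mono_none : ∀ {i j : I} (hij : i ≤ j) {n} (f : L.Functions n) (hf : f ∈ Fs i n)
    (x : Fin n → X i), op i f hf x = none →
      ∀ y : X i, op j f (mono hij f hf) (fun k => γ hij (x k)) ≠ some (γ hij y)
  const_total : ∀ c : L.Constants, ∃ (i : I) (hc : c ∈ Fs i 0) (y : X i),
      op i c hc (fun k => k.elim0) = some y
  op_total : ∀ (i : I) {n} (f : L.Functions n) (x : Fin n → X i),
      ∃ (j : I) (hij : i ≤ j) (hf : f ∈ Fs j n) (y : X j),
        op j f hf (fun k => γ hij (x k)) = some y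

namespace DiagramSystem

variable {I : Type w} [Preorder I] (Λ : DiagramSystem L I)

/-- Two pairs `(x, i)` and `(y, j)` are identified in the limit iff the variables are eventually
mapped to the same variable. -/
def rel : (Σ i, Λ.X i) → (Σ i, Λ.X i) → Prop :=
  fun a b => ∃ (k : I) (hik : a.1 ≤ k) (hjk : b.1 ≤ k), Λ.γ hik a.2 = Λ.γ hjk b.2

theorem rel_equivalence : Equivalence Λ.rel := by
  constructor
  · exact fun a => ⟨a.1, le_refl _, le_refl _, rfl⟩
  · rintro a b ⟨k, h1, h2, e⟩; exact ⟨k, h2, h1, e.symm⟩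
  · rintro a b c ⟨k₁, h1, h2, e1⟩ ⟨k₂, h3, h4, e2⟩
    obtain ⟨m, hm1, hm2⟩ := Λ.directed k₁ k₂
    refine ⟨m, le_trans h1 hm1, le_trans h4 hm2, ?_⟩
    have e1' := congrArg (Λ.γ hm1) e1
    have e2' := congrArg (Λ.γ hm2) e2
    rw [Λ.γ_comp, Λ.γ_comp] at e1'
    rw [Λ.γ_comp, Λ.γ_comp] at e2'
    exact e1'.trans e2'

/-- The setoid underlying the limit algebra. -/
def limSetoid : Setoid (Σ i, Λ.X i) := ⟨Λ.rel, Λ.rel_equivalence⟩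

/-- The underlying set of the limit algebra `L(Λ)`. -/
def Limit : Type _ := Quotient Λ.limSetoid

/-- A witness for the value of an operation on the limit algebra. -/
def FunWitness {n : ℕ} (f : L.Functions n) (x : Fin n → Λ.Limit) (q : Σ i, Λ.X i) : Prop :=
  ∃ (hf : f ∈ Λ.Fs q.1 n) (g : Fin n → Λ.X q.1),
    (∀ k, Quotient.mk Λ.limSetoid ⟨q.1, g k⟩ = x k) ∧ Λ.op q.1 f hf g = some q.2

theorem exists_funWitness {n : ℕ} (f : L.Functions n) (x : Fin n → Λ.Limit) :
    ∃ q, Λ.FunWitness f x q := by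
  rcases n with _ | m
  · obtain ⟨i, hc, y, hy⟩ := Λ.const_total f
    exact ⟨⟨i, y⟩, hc, fun k => k.elim0, fun k => k.elim0, hy⟩
  · classical
    set rep : Fin (m + 1) → Σ i, Λ.X i := fun k => (x k).out with hrep
    haveI : Nonempty I := ⟨(rep 0).1⟩
    haveI : IsDirected I (· ≤ ·) := ⟨Λ.directed⟩
    obtain ⟨j₀, hj₀⟩ := (Finset.univ.image fun k => (rep k).1).exists_le
    have hle : ∀ k, (rep k).1 ≤ j₀ := fun k =>
      hj₀ _ (Finset.mem_image_of_mem _ (Finset.mem_univ k))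
    obtain ⟨j, hj, hf, y, hy⟩ := Λ.op_total j₀ f (fun k => Λ.γ (hle k) (rep k).2)
    refine ⟨⟨j, y⟩, hf, fun k => Λ.γ hj (Λ.γ (hle k) (rep k).2), fun k => ?_, hy⟩
    rw [← (x k).out_eq]
    exact Quotient.sound
      ⟨j, le_refl j, le_trans (hle k) hj, by simp only [Λ.γ_rfl, Λ.γ_comp] <;> rfl⟩

/-- The `L`-structure on the limit algebra `L(Λ)`. -/
noncomputable def limitStructure : L.Structure Λ.Limit where
  funMap {n} f x := Quotient.mk Λ.limSetoid (Λ.exists_funWitness f x).choose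
  RelMap {n} _ _ := False

/-- The diagram-formula `φ_i` of the system is realized in the `L`-algebra `B`:
there is an assignment of the variables of `X i` in `B` making all the conjuncts true. -/
def Realizes (i : I) (B : Type*) [L.Structure B] : Prop :=
  ∃ h : Λ.X i → B, Function.Injective h ∧
    ∀ {n : ℕ} (f : L.Functions n) (hf : f ∈ Λ.Fs i n) (x : Fin n → Λ.X i),
      (∀ y : Λ.X i, Λ.op i f hf x = some y → funMap f (fun k => h (x k)) = h y) ∧
      (Λ.op i f hf x = none → ∀ y : Λ.X i, funMap f (fun k => h (x k)) ≠ h y)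




end DiagramSystem

/-
Take for `Λ` the canonical system `Λ^C`, indexed by pairs `(A, F)` of a finite set `A ⊆ C` and a
finite set `F` of operation symbols, whose diagram-formula lists which equations `a = b` and
`f(x̄) = y` (`f ∈ F`, `x̄, y` in `A`) hold in `C`. Every element of its limit has a well-defined
value in `C`, and this is an isomorphism `L(Λ^C) ≅ C`. Each diagram-formula is quantifier-free and
realized in `C` by the inclusion `A ⊆ C`, so its existential closure is true in `C`, hence in `B`;
a solution in `B` is a realization of the diagram in `B`.
-/

attribute [local instance] DiagramSystem.limitStructure

section Formulas

variable {M N α β : Type*} [L.Structure M] [L.Structure N]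

theorem isQF_foldr_inf {n : ℕ} {l : List (L.BoundedFormula α n)} (h : ∀ φ ∈ l, φ.IsQF) :
    (l.foldr (· ⊓ ·) ⊤).IsQF := by
  induction l with
  | nil => exact BoundedFormula.IsQF.top
  | cons φ l ih =>
    exact (h φ List.mem_cons_self).inf (ih fun ψ hψ => h ψ (List.mem_cons_of_mem _ hψ))

theorem isQF_iInf [Finite β] {φ : β → L.Formula α} (h : ∀ b, (φ b).IsQF) :
    (Formula.iInf φ).IsQF :=
  isQF_foldr_inf fun ψ hψ => by
    obtain ⟨b, -, rfl⟩ := List.mem_map.mp hψ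
    exact h b

open scoped Classical in
noncomputable def signedConj [Finite β] (φ : β → L.Formula α) (v : α → M) : L.Formula α :=
  Formula.iInf fun b => if (φ b).Realize v then φ b else (φ b).not

theorem realize_signedConj_iff [Finite β] {φ : β → L.Formula α} {v : α → M} {w : α → N} :
    (signedConj φ v).Realize w ↔ ∀ b, ((φ b).Realize w ↔ (φ b).Realize v) := by
  simp only [signedConj, Formula.realize_iInf]
  refine forall_congr' fun b => ?_
  split_ifs with h <;> simp [h]

theorem realize_signedConj_self [Finite β] (φ : β → L.Formula α) (v : α → M) :
    (signedConj φ v).Realize v :=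
  realize_signedConj_iff.2 fun _ => Iff.rfl

theorem isQF_signedConj [Finite β] {φ : β → L.Formula α} (h : ∀ b, (φ b).IsQF) (v : α → M) :
    (signedConj φ v).IsQF :=
  isQF_iInf fun b => by
    split_ifs
    exacts [h b, (h b).not]

theorem realize_iExs_relabel_inr [Finite α] {φ : L.Formula α} :
    M ⊨ Formula.iExs α (φ.relabel Sum.inr) ↔ ∃ v : α → M, φ.Realize v := by
  simp only [Sentence.Realize, Formula.realize_iExs, Formula.realize_relabel]
  rfl

theorem exists_realize_of_existential
    (hex : ∀ (n : ℕ) (ψ : L.BoundedFormula Empty n), ψ.IsQF → M ⊨ ψ.exs → N ⊨ ψ.exs)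
    [Finite α] {φ : L.Formula α} (hφ : φ.IsQF) (h : ∃ v : α → M, φ.Realize v) :
    ∃ w : α → N, φ.Realize w :=
  -- `Formula.iExs` unfolds to `exs` of a relabelling of `φ`, which is still quantifier-free.
  realize_iExs_relabel_inr.1 <|
    hex _ _ ((hφ.relabel _).relabel _) (realize_iExs_relabel_inr.2 h)

end Formulas

namespace DiagramSystem

theorem exists_funMap_eq_mk {I : Type w} [Preorder I] (Λ : DiagramSystem L I) {n : ℕ}
    (f : L.Functions n) (x : Fin n → Λ.Limit) :
    ∃ q, Λ.FunWitness f x q ∧ funMap f x = Quotient.mk Λ.limSetoid q :=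
  ⟨_, (Λ.exists_funWitness f x).choose_spec, rfl⟩

/-- An index `(A, F)` of `Λ^C`: the variables `A` are elements of `C`, and `F` lists the
operation symbols of the diagram. -/
abbrev CanonicalIndex (L : FirstOrder.Language.{u, v}) (C : Type x) : Type max u x :=
  Finset C × Finset (Σ n, L.Functions n)

section Canonical

variable {L : FirstOrder.Language.{u, v}} (C : Type x) [L.Structure C]

open scoped Classical in
noncomputable def canonicalOp (i : CanonicalIndex L C) {n : ℕ} (f : L.Functions n)
    (x : Fin n → i.1) : Option i.1 :=
  if h : funMap f (fun k => (x k : C)) ∈ i.1 then some ⟨_, h⟩ else none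

variable {C}

theorem canonicalOp_eq_some_iff {i : CanonicalIndex L C} {n : ℕ} {f : L.Functions n}
    {x : Fin n → i.1} {y : i.1} :
    canonicalOp C i f x = some y ↔ (y : C) = funMap f fun k => (x k : C) := by
  unfold canonicalOp
  split_ifs with h
  · rw [Option.some_inj, ← Subtype.val_inj, eq_comm]
  · simp only [false_iff]
    exact fun hy => h (hy ▸ y.2)

theorem canonicalOp_eq_none_iff {i : CanonicalIndex L C} {n : ℕ} {f : L.Functions n}
    {x : Fin n → i.1} :
    canonicalOp C i f x = none ↔ (funMap f fun k => (x k : C)) ∉ i.1 := by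
  unfold canonicalOp
  split_ifs with h <;> simp [h]

variable (C)

variable (L) in
/-- The canonical direct system `Λ^C`. -/
noncomputable def canonical : DiagramSystem L (CanonicalIndex L C) where
  directed i j := by
    classical
    exact ⟨i ⊔ j, le_sup_left, le_sup_right⟩
  X i := i.1
  finX _ := inferInstance
  γ h x := ⟨x, h.1 x.2⟩
  γ_rfl _ _ := rfl
  γ_comp _ _ _ := rfl
  γ_inj _ _ _ h := Subtype.ext (congrArg Subtype.val h :)
  Fs i n := {f | (⟨n, f⟩ : Σ n, L.Functions n) ∈ i.2}
  finFs i := i.2.finite_toSet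
  mono h _ _ hf := h.2 hf
  op i _ f _ x := canonicalOp C i f x
  op_mono_some _ _ _ _ _ _ h := canonicalOp_eq_some_iff.2 (canonicalOp_eq_some_iff.1 h :)
  op_mono_none _ _ _ _ _ h y hy :=
    canonicalOp_eq_none_iff.1 h (canonicalOp_eq_some_iff.1 hy ▸ y.2)
  const_total c := ⟨({funMap c default}, {⟨0, c⟩}), Finset.mem_singleton_self _,
    ⟨_, Finset.mem_singleton_self _⟩,
    canonicalOp_eq_some_iff.2 (congrArg (funMap c) (Subsingleton.elim _ _))⟩
  op_total i n f x := by
    classical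
    exact ⟨(insert (funMap f fun k => (x k : C)) i.1, insert ⟨n, f⟩ i.2),
      ⟨Finset.subset_insert _ _, Finset.subset_insert _ _⟩, Finset.mem_insert_self _ _,
      ⟨_, Finset.mem_insert_self _ _⟩, canonicalOp_eq_some_iff.2 rfl⟩

variable (L) in
noncomputable def canonicalVal : (canonical L C).Limit → C :=
  Quotient.lift (fun p => (show p.1.1 from p.2).1) fun _ _ ⟨_, _, _, e⟩ => congrArg Subtype.val e

theorem canonicalVal_injective : Function.Injective (canonicalVal L C) := by
  classical
  rintro ⟨p⟩ ⟨q⟩ h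
  refine Quotient.sound ⟨p.1 ⊔ q.1, le_sup_left, le_sup_right, Subtype.ext ?_⟩
  exact h

theorem canonicalVal_surjective : Function.Surjective (canonicalVal L C) := fun c =>
  ⟨Quotient.mk _ ⟨({c}, ∅), ⟨c, Finset.mem_singleton_self c⟩⟩, rfl⟩

theorem canonicalVal_funMap {n : ℕ} (f : L.Functions n) (x : Fin n → (canonical L C).Limit) :
    canonicalVal L C (funMap f x) = funMap f (canonicalVal L C ∘ x) := by
  obtain ⟨q, hq, hfx⟩ := (canonical L C).exists_funMap_eq_mk f x
  obtain ⟨_, g, hg, hop⟩ := hq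
  rw [hfx, ← funext hg]
  exact canonicalOp_eq_some_iff.1 hop

variable (L) in
noncomputable def limitEquiv [∀ n, IsEmpty (L.Relations n)] : (canonical L C).Limit ≃[L] C where
  toEquiv := .ofBijective (canonicalVal L C) ⟨canonicalVal_injective C, canonicalVal_surjective C⟩
  map_fun' := canonicalVal_funMap C
  map_rel' r := isEmptyElim r

/-- The atomic formulas of the diagram of `(A, F)`: `a = b` for `a b ∈ A`, and `f(x̄) = y` for
`f ∈ F` and `x̄, y` in `A`. -/
abbrev DiagramAtom (i : CanonicalIndex L C) : Type max u x :=
  (i.1 × i.1) ⊕ Σ f : i.2, (Fin f.1.1 → i.1) × i.1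

def diagramAtom (i : CanonicalIndex L C) : DiagramAtom C i → L.Formula i.1
  | .inl (a, b) => Term.equal (.var a) (.var b)
  | .inr ⟨f, x, y⟩ => Term.equal (.func f.1.2 fun k => .var (x k)) (.var y)

/-- The diagram-formula of `(A, F)`. Unlike the paper's, it also negates `f(x̄) = y` when `f(x̄)`
is defined; since the variables are distinct, this does not change its realizations. -/
noncomputable def diagram (i : CanonicalIndex L C) : L.Formula i.1 :=
  signedConj (diagramAtom C i) Subtype.val

theorem isQF_diagram (i : CanonicalIndex L C) : (diagram C i).IsQF :=
  isQF_signedConj (fun b => by cases b <;> exact (BoundedFormula.IsAtomic.equal _ _).isQF) _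

variable {C}

theorem realizes_of_realize_diagram {B : Type*} [L.Structure B] {i : CanonicalIndex L C}
    {w : i.1 → B} (hw : (diagram C i).Realize w) : (canonical L C).Realizes i B := by
  have hatom := realize_signedConj_iff.1 hw
  refine ⟨w, fun a b hab => Subtype.ext ?_, fun f hf x => ⟨fun y hy => ?_, fun hnone y => ?_⟩⟩
  · exact (hatom (.inl (a, b))).1 hab
  all_goals
    have hfxy := hatom (.inr ⟨⟨⟨_, f⟩, hf⟩, x, y⟩)
    simp only [diagramAtom, Formula.realize_equal, Term.realize_func] at hfxy
  · exact hfxy.2 (canonicalOp_eq_some_iff.1 hy).symm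
  · exact fun h => canonicalOp_eq_none_iff.1 hnone (hfxy.1 h ▸ y.2)

end Canonical

end DiagramSystem

/-- Let `B` and `C` be `L`-algebras in a functional language `L`.  If every
existential sentence true in `C` is true in `B` (`Th_∃(B) ⊇ Th_∃(C)`), then `C` is isomorphic to
a limit algebra over `B`: there is a direct system `Λ` of diagram-formulas, each realizable in
`B`, with `C ≅ L(Λ)`. -/
theorem isomorphic_to_limit_algebra_of_existential {L : FirstOrder.Language.{u, v}}
    [∀ k, IsEmpty (L.Relations k)]
    (B : Type x) [L.Structure B] (C : Type x) [L.Structure C]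
    (hex : ∀ (n : ℕ) (ψ : L.BoundedFormula Empty n),
      ψ.IsQF → C ⊨ ψ.exs → B ⊨ ψ.exs) :
    ∃ (I : Type (max u x)) (pre : Preorder I)
      (Λ : @DiagramSystem.{u, v, max u x, x} L I pre),
      (∀ i : I, @DiagramSystem.Realizes L I pre Λ i B _) ∧
      Nonempty (@FirstOrder.Language.Equiv L C (@DiagramSystem.Limit L I pre Λ) _
        (@DiagramSystem.limitStructure L I pre Λ)) := by
  refine ⟨DiagramSystem.CanonicalIndex L C, inferInstance, DiagramSystem.canonical L C,
    fun i => ?_, ⟨(DiagramSystem.limitEquiv L C).symm⟩⟩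
  obtain ⟨w, hw⟩ := exists_realize_of_existential hex (DiagramSystem.isQF_diagram C i)
    ⟨_, realize_signedConj_self _ _⟩
  exact DiagramSystem.realizes_of_realize_diagram hw

end UAG
end

section
/- Let B be an equationally Noetherian L-algebra and C a finitely generated L-algebra such that every universal sentence true in B is true in C (C ∈ Ucl(B)). Then C is discriminated by B. -/
open FirstOrder Language Structure

universe u

namespace UAG

variable {L : FirstOrder.Language}

/-- Let `B` be an equationally Noetherian `L`-algebra and `C` a finitely
generated `L`-algebra lying in the universal closure of `B` (every universal sentence true in `B`
is true in `C`).  Then `C` is discriminated by `B`: for every finite list of pairs of distinct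
elements of `C` there is a homomorphism `C → B` separating all the pairs simultaneously. -/
theorem ucl_implies_discriminated [∀ k, IsEmpty (L.Relations k)]
    (B : Type u) [L.Structure B] (C : Type u) [L.Structure C]
    (hnoeth : ∀ (n : ℕ) (S : Set (L.Term (Fin n) × L.Term (Fin n))),
      ∃ S₀ : Set (L.Term (Fin n) × L.Term (Fin n)),
        S₀ ⊆ S ∧ S₀.Finite ∧ solSet B S₀ = solSet B S)
    (hfg : Structure.FG L C)
    (hucl : ∀ (n : ℕ) (ψ : L.BoundedFormula Empty n),
      ψ.IsQF → B ⊨ ψ.alls → C ⊨ ψ.alls) :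
    ∀ (m : ℕ) (c d : Fin m → C), (∀ i, c i ≠ d i) →
      ∃ h : C →[L] B, ∀ i, h (c i) ≠ h (d i) := by
  classical
  -- a finite generating family
  obtain ⟨n, g, hg⟩ := Substructure.fg_iff_exists_fin_generating_family.mp
    (Structure.fg_def.mp hfg)
  -- every element of C is the realization of a term at g
  have hrep : ∀ y : C, ∃ t : L.Term (Fin n), t.realize g = y := by
    intro y
    have hy : y ∈ Substructure.closure L (Set.range g) := hg ▸ Substructure.mem_top y
    obtain ⟨t, ht⟩ := Substructure.mem_closure_iff_exists_term.mp hy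
    refine ⟨t.relabel fun z => z.2.choose, ?_⟩
    rw [Term.realize_relabel]
    rw [← ht]
    congr 1
    funext z
    exact z.2.choose_spec
  set rep : C → L.Term (Fin n) := fun y => (hrep y).choose with hrepdef
  have hrepg : ∀ y : C, (rep y).realize g = y := fun y => (hrep y).choose_spec
  -- the full system of relations satisfied by g
  set S : Set (L.Term (Fin n) × L.Term (Fin n)) :=
    {p | p.1.realize g = p.2.realize g} with hSdef
  obtain ⟨S₀, hsub, hfin, hsol⟩ := hnoeth n S
  intro m c d hcd
  -- the quantifier-free matrix of the universal sentence
  set conj : L.BoundedFormula Empty n :=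
    (hfin.toFinset.toList.map fun e =>
      Term.bdEqual (e.1.relabel Sum.inr) (e.2.relabel Sum.inr)).foldr (· ⊓ ·) ⊤ with hconj
  set disj : L.BoundedFormula Empty n :=
    ((List.finRange m).map fun i =>
      Term.bdEqual ((rep (c i)).relabel Sum.inr) ((rep (d i)).relabel Sum.inr)).foldr
      (· ⊔ ·) ⊥ with hdisj
  set ψ : L.BoundedFormula Empty n := conj.imp disj with hψ
  have hqf : ψ.IsQF := by
    refine BoundedFormula.IsQF.imp ?_ ?_
    · rw [hconj]
      generalize hfin.toFinset.toList = l
      induction l with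
      | nil => exact BoundedFormula.IsQF.top
      | cons a l ih => exact BoundedFormula.IsQF.inf (BoundedFormula.IsAtomic.equal _ _).isQF ih
    · rw [hdisj]
      generalize (List.finRange m) = l
      induction l with
      | nil => exact BoundedFormula.isQF_bot
      | cons a l ih => exact BoundedFormula.IsQF.sup (BoundedFormula.IsAtomic.equal _ _).isQF ih
  -- realization of the matrix
  have hrealize : ∀ (M : Type u) [L.Structure M] (x : Fin n → M),
      ψ.Realize (default : Empty → M) x ↔
        ((∀ p ∈ S₀, p.1.realize x = p.2.realize x) →
          ∃ i, (rep (c i)).realize x = (rep (d i)).realize x) := by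
    intro M _ x
    rw [hψ, BoundedFormula.realize_imp, hconj, hdisj,
      BoundedFormula.realize_foldr_inf, BoundedFormula.realize_foldr_sup]
    constructor
    · intro h hS₀
      have hpre : ∀ φ ∈ hfin.toFinset.toList.map fun e =>
          Term.bdEqual (e.1.relabel Sum.inr) (e.2.relabel Sum.inr),
          BoundedFormula.Realize φ (default : Empty → M) x := by
        intro φ hφmem
        simp only [List.mem_map, Finset.mem_toList, Set.Finite.mem_toFinset] at hφmem
        obtain ⟨e, he, rfl⟩ := hφmem
        simpa [Term.realize_relabel, Sum.elim_comp_inr] using hS₀ e he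
      obtain ⟨φ, hφmem, hφ⟩ := h hpre
      simp only [List.mem_map, List.mem_finRange, true_and] at hφmem
      obtain ⟨i, rfl⟩ := hφmem
      refine ⟨i, ?_⟩
      simpa [Term.realize_relabel, Sum.elim_comp_inr] using hφ
    · intro h hall
      have hS₀ : ∀ p ∈ S₀, p.1.realize x = p.2.realize x := by
        intro p hp
        have := hall (Term.bdEqual (p.1.relabel Sum.inr) (p.2.relabel Sum.inr)) ?_
        · simpa [Term.realize_relabel, Sum.elim_comp_inr] using this
        · simp only [List.mem_map, Finset.mem_toList, Set.Finite.mem_toFinset]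
          exact ⟨p, hp, rfl⟩
      obtain ⟨i, hi⟩ := h hS₀
      refine ⟨_, List.mem_map.mpr ⟨i, List.mem_finRange i, rfl⟩, ?_⟩
      simpa [Term.realize_relabel, Sum.elim_comp_inr] using hi
  -- the universal sentence fails in C (at g), hence it fails in B
  have hCfail : ¬ (C ⊨ ψ.alls) := by
    intro hC
    have := (BoundedFormula.realize_alls.mp hC) g
    rw [hrealize] at this
    obtain ⟨i, hi⟩ := this (fun p hp => hsub hp)
    exact hcd i (by rw [← hrepg (c i), ← hrepg (d i)]; exact hi)
  have hBfail : ¬ (B ⊨ ψ.alls) := fun hB => hCfail (hucl n ψ hqf hB)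
  -- extract a solution x in B satisfying S₀ (hence S) but separating the pairs
  have hx : ∃ x : Fin n → B, (∀ p ∈ S, p.1.realize x = p.2.realize x) ∧
      ∀ i, (rep (c i)).realize x ≠ (rep (d i)).realize x := by
    by_contra hcon
    push_neg at hcon
    apply hBfail
    refine BoundedFormula.realize_alls.mpr fun x => (hrealize B x).mpr fun hS₀ => ?_
    have hxS : ∀ p ∈ S, p.1.realize x = p.2.realize x := by
      have : x ∈ solSet B S₀ := hS₀
      rw [hsol] at this
      exact this
    obtain ⟨i, hi⟩ := hcon x hxS
    exact ⟨i, hi⟩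
  obtain ⟨x, hxS, hxsep⟩ := hx
  -- the separating homomorphism
  have hkey : ∀ (t : L.Term (Fin n)) (y : C), t.realize g = y →
      t.realize x = (rep y).realize x := by
    intro t y ht
    exact hxS (t, rep y) (by simp only [hSdef, Set.mem_setOf_eq]; rw [ht, hrepg])
  refine ⟨⟨fun y => (rep y).realize x, ?_, ?_⟩, ?_⟩
  · intro k f v
    have h1 : (Term.func f fun j => rep (v j) : L.Term (Fin n)).realize g = funMap f v := by
      simp only [Term.realize]
      congr 1
      funext j
      exact hrepg (v j)
    have := hkey (Term.func f fun j => rep (v j)) (funMap f v) h1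
    simp only [Term.realize] at this
    exact this.symm
  · intro k r
    exact (IsEmpty.false r).elim
  · intro i
    exact hxsep i

end UAG
end
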